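/- Every whirl map is incompressible: if u(x) = Q[f](y(x)) x is a whirl map with Q[f] of class C¹, then det ∇u(x) = 1 for all x. More precisely det∇u = det[I_n + Σ_{ℓ=1}^N Qᵗ∂_ℓQ x ⊗ ∇y_ℓ], and since the vectors p_ℓ = Qᵗ∂_ℓQ x and q_k = ∇y_k satisfy ⟨p_ℓ, q_k⟩ = 0 for all 1 ≤ ℓ, k ≤ N, it follows that det[I_n + Σ_{ℓ=1}^N p_ℓ ⊗ q_ℓ] = 1. -/

import Mathlib

open scoped BigOperators
open Matrix

noncomputable section

/-- Partial derivative `∂g/∂x_j` of a scalar field on `ℝᵐ`. -/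
def pdx {m : ℕ} (g : (Fin m → ℝ) → ℝ) (x : Fin m → ℝ) (j : Fin m) : ℝ :=
  fderiv ℝ g x (Pi.single j 1)

/-- Gradient of a scalar field on `ℝᵐ`. -/
def gradx {m : ℕ} (g : (Fin m → ℝ) → ℝ) (x : Fin m → ℝ) : Fin m → ℝ :=
  fun j => pdx g x j

/-- Gradient matrix `∇u`, with entries `(∇u)_{ij} = ∂u_i/∂x_j`. -/
def gradm {n : ℕ} (u : (Fin n → ℝ) → Fin n → ℝ) (x : Fin n → ℝ) :
    Matrix (Fin n) (Fin n) ℝ :=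
  Matrix.of fun i j => pdx (fun z => u z i) x j

/-- Laplacian of a scalar field. -/
def lapx {m : ℕ} (g : (Fin m → ℝ) → ℝ) (x : Fin m → ℝ) : ℝ :=
  ∑ j, pdx (fun z => pdx g z j) x j

/-- Hessian matrix of a scalar field. -/
def hessx {m : ℕ} (g : (Fin m → ℝ) → ℝ) (x : Fin m → ℝ) : Matrix (Fin m) (Fin m) ℝ :=
  Matrix.of fun i j => pdx (fun z => pdx g z j) x i

/-- Componentwise Laplacian of a vector field. -/
def lapv {n : ℕ} (u : (Fin n → ℝ) → Fin n → ℝ) (x : Fin n → ℝ) : Fin n → ℝ :=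
  fun i => lapx (fun z => u z i) x

/-- Squared Euclidean norm of a vector. -/
def norm2 {m : ℕ} (v : Fin m → ℝ) : ℝ := ∑ i, v i ^ 2

/-- Euclidean norm of a vector. -/
def enr {m : ℕ} (v : Fin m → ℝ) : ℝ := Real.sqrt (norm2 v)

/-- Squared Frobenius norm of a matrix, `|E|² = tr (EᵗE)`. -/
def frob2 {n : ℕ} (M : Matrix (Fin n) (Fin n) ℝ) : ℝ := ∑ i, ∑ j, M i j ^ 2

/-- The 2-plane radial variables `y = (y_1, …, y_N)`, `N = ⌈n/2⌉` (0-indexed):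
`y_ℓ = √(x_{2ℓ}² + x_{2ℓ+1}²)` and, when `n` is odd, `y_{N-1} = x_{n-1}`. -/
def yvar {n : ℕ} (x : Fin n → ℝ) (ℓ : Fin ((n+1)/2)) : ℝ :=
  if h : 2 * (ℓ : ℕ) + 1 < n then
    Real.sqrt (x ⟨2*(ℓ:ℕ), by omega⟩ ^ 2 + x ⟨2*(ℓ:ℕ)+1, h⟩ ^ 2)
  else x ⟨n - 1, by have := ℓ.isLt; omega⟩

/-- The vector of 2-plane radial variables of `x`. -/
def yv {n : ℕ} (x : Fin n → ℝ) : Fin ((n+1)/2) → ℝ := fun ℓ => yvar x ℓ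

/-- Inclusion `Fin (n/2) → Fin ((n+1)/2)`, i.e. `d = ⌊n/2⌋` into `N = ⌈n/2⌉`. -/
def dIdx {n : ℕ} (i : Fin (n/2)) : Fin ((n+1)/2) := ⟨(i:ℕ), by have := i.isLt; omega⟩

/-- Partial derivative `∂_ℓ M` of a matrix field on `ℝᴺ`. -/
def pdM {n N : ℕ} (M : (Fin N → ℝ) → Matrix (Fin n) (Fin n) ℝ)
    (y : Fin N → ℝ) (ℓ : Fin N) : Matrix (Fin n) (Fin n) ℝ :=
  Matrix.of fun i j => pdx (fun z => M z i j) y ℓ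

/-- Second partial derivative `∂²_{ℓk} M` of a matrix field on `ℝᴺ`. -/
def pdM2 {n N : ℕ} (M : (Fin N → ℝ) → Matrix (Fin n) (Fin n) ℝ)
    (y : Fin N → ℝ) (ℓ k : Fin N) : Matrix (Fin n) (Fin n) ℝ :=
  Matrix.of fun i j => pdx (fun z => pdM M z ℓ i j) y k

/-- The block diagonal `SO(n)`-valued matrix field `Q[f]`, with `2×2` rotation blocks
`R[f_ℓ(y)]` (and an extra diagonal `1` when `n` is odd). -/
def Qf {n : ℕ} (f : (Fin ((n+1)/2) → ℝ) → Fin (n/2) → ℝ)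
    (y : Fin ((n+1)/2) → ℝ) : Matrix (Fin n) (Fin n) ℝ :=
  Matrix.of fun i j =>
    if h : (i:ℕ)/2 = (j:ℕ)/2 ∧ (i:ℕ)/2 < n/2 then
      (if (i:ℕ) % 2 = 0 then
        (if (j:ℕ) % 2 = 0 then Real.cos (f y ⟨(i:ℕ)/2, h.2⟩)
         else -Real.sin (f y ⟨(i:ℕ)/2, h.2⟩))
       else
        (if (j:ℕ) % 2 = 0 then Real.sin (f y ⟨(i:ℕ)/2, h.2⟩)
         else Real.cos (f y ⟨(i:ℕ)/2, h.2⟩)))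
    else (if i = j then 1 else 0)

/-- The block diagonal rotation matrix `exp(α𝐇) = diag(R[α], …, R[α])`
(an extra diagonal `1` when `n` is odd). -/
def rotM (n : ℕ) (α : ℝ) : Matrix (Fin n) (Fin n) ℝ :=
  Matrix.of fun i j =>
    if (i:ℕ)/2 = (j:ℕ)/2 ∧ (i:ℕ)/2 < n/2 then
      (if (i:ℕ) % 2 = 0 then
        (if (j:ℕ) % 2 = 0 then Real.cos α else -Real.sin α)
       else
        (if (j:ℕ) % 2 = 0 then Real.sin α else Real.cos α))
    else (if i = j then 1 else 0)

/-- The vector `w^k = (0, …, 0, x_{2k}, x_{2k+1}, 0, …, 0)`. -/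
def wv {n : ℕ} (x : Fin n → ℝ) (k : Fin ((n+1)/2)) : Fin n → ℝ :=
  fun j => if (j:ℕ)/2 = (k:ℕ) then x j else 0

/-- The vector `[w^k]^⊥ = (0, …, 0, -x_{2k+1}, x_{2k}, 0, …, 0)` (zero in the odd last slot). -/
def wperp {n : ℕ} (x : Fin n → ℝ) (k : Fin ((n+1)/2)) : Fin n → ℝ :=
  fun j =>
    if h : (j:ℕ)/2 = (k:ℕ) ∧ 2*(k:ℕ)+1 < n then
      (if (j:ℕ) % 2 = 0 then -x ⟨2*(k:ℕ)+1, h.2⟩ else x ⟨2*(k:ℕ), by omega⟩)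
    else 0

/-- The differential operator
`𝓛[u;A,B] = [∇u]ᵗ[∇u]∇A + A [∇u]ᵗΔu + B [∇u]ᵗu`, where `A, B` are evaluated at
`(|x|, |u|², |∇u|²)` and `∇A` is the spatial gradient of `x ↦ A(|x|,|u(x)|²,|∇u(x)|²)`. -/
def LAB {n : ℕ} (A B : ℝ → ℝ → ℝ → ℝ) (u : (Fin n → ℝ) → Fin n → ℝ)
    (x : Fin n → ℝ) : Fin n → ℝ :=
  ((gradm u x)ᵀ * gradm u x) *ᵥ
      gradx (fun z => A (enr z) (norm2 (u z)) (frob2 (gradm u z))) x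
    + A (enr x) (norm2 (u x)) (frob2 (gradm u x)) • ((gradm u x)ᵀ *ᵥ lapv u x)
    + B (enr x) (norm2 (u x)) (frob2 (gradm u x)) • ((gradm u x)ᵀ *ᵥ u x)

/-- The annulus `𝕏ₙ = {x : a < |x| < b}` in `ℝⁿ`. -/
def Xann (n : ℕ) (a b : ℝ) : Set (Fin n → ℝ) := {x | a < enr x ∧ enr x < b}

/-- The region `𝔸ₙ = {y : a < ‖y‖ < b}` (with the 2-plane radial coordinates positive). -/
def Ann (n : ℕ) (a b : ℝ) : Set (Fin ((n+1)/2) → ℝ) :=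
  {y | a < enr y ∧ enr y < b ∧ ∀ ℓ : Fin ((n+1)/2), 2*(ℓ:ℕ)+1 < n → 0 < y ℓ}

/-- `𝒥(y) = y_1 ⋯ y_d`. -/
def Jac (n : ℕ) (y : Fin ((n+1)/2) → ℝ) : ℝ :=
  ∏ ℓ : Fin ((n+1)/2), if 2*(ℓ:ℕ)+1 < n then y ℓ else 1

/-- The argument `ξ = n + Σ_j y_j² |∇f_j|²`. -/
def xiArg (n : ℕ) (f : (Fin ((n+1)/2) → ℝ) → Fin (n/2) → ℝ)
    (y : Fin ((n+1)/2) → ℝ) : ℝ :=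
  (n : ℝ) + ∑ j : Fin (n/2), (y (dIdx j))^2 * norm2 (gradx (fun z => f z j) y)

/-- The coefficients `𝒜_i(y,∇f) = y_i² A(z, z², n + Σ_j y_j²|∇f_j|²) 𝒥(y)`, `z = ‖y‖`. -/
def coefA (n : ℕ) (A : ℝ → ℝ → ℝ → ℝ) (f : (Fin ((n+1)/2) → ℝ) → Fin (n/2) → ℝ)
    (i : Fin (n/2)) (y : Fin ((n+1)/2) → ℝ) : ℝ :=
  (y (dIdx i))^2 * A (enr y) ((enr y)^2) (xiArg n f y) * Jac n y

/-- `div [𝒜_i(y,∇f) ∇f_i]`, divergence taken in the `y` variables. -/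
def divA (n : ℕ) (A : ℝ → ℝ → ℝ → ℝ) (f : (Fin ((n+1)/2) → ℝ) → Fin (n/2) → ℝ)
    (i : Fin (n/2)) (y : Fin ((n+1)/2) → ℝ) : ℝ :=
  ∑ k, pdx (fun z => coefA n A f i z * pdx (fun w => f w i) z k) y k

/-- The curl of a vector field, `[curl U]_{ij} = ∂_j U_i − ∂_i U_j`. -/
def curlm {n : ℕ} (U : (Fin n → ℝ) → Fin n → ℝ) (x : Fin n → ℝ) :
    Matrix (Fin n) (Fin n) ℝ :=
  Matrix.of fun i j => pdx (fun z => U z i) x j - pdx (fun z => U z j) x i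

end

/-!
Write `p_ℓ = Qᵀ∂_ℓQ x` and `q_ℓ = ∇y_ℓ`. The chain rule gives
`∇u = Q + Σ_ℓ ∂_ℓQ x ⊗ ∇y_ℓ = Q (I + Σ_ℓ p_ℓ ⊗ q_ℓ)`, and `det Q = 1` since `Q` is orthogonal
and joined to `I` by the path `t ↦ Q[t f]`, along which the determinant stays in `{±1}`.
With the `p_ℓ` as the columns of `P` and the `q_ℓ` as the rows of `R`, the Weinstein–Aronszajn
identity gives `det (I + P R) = det (I + R P) = 1`, because `R P = (⟨q_k, p_ℓ⟩)` vanishes: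
differentiating `QᵀQ = I` shows that `Qᵀ∂_ℓQ` is skew, it is block diagonal on the coordinate
pairs `{2k, 2k+1}`, and `∇y_k` is supported on the `k`-th pair, where it is parallel to `x`.
-/

theorem det_one_add_sum_vecMulVec {n N : ℕ} (p q : Fin N → Fin n → ℝ)
    (hpq : ∀ ℓ k, p ℓ ⬝ᵥ q k = 0) : (1 + ∑ ℓ, vecMulVec (p ℓ) (q ℓ)).det = 1 := by
  have hsum : ∑ ℓ, vecMulVec (p ℓ) (q ℓ) = (of fun i ℓ => p ℓ i) * of q := by
    ext i j
    simp [mul_apply, vecMulVec_apply, Matrix.sum_apply]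
  have hzero : of q * (of fun i ℓ => p ℓ i) = 0 := by
    ext k ℓ
    simpa [mul_apply, dotProduct, mul_comm] using hpq ℓ k
  rw [hsum, det_one_add_mul_comm, hzero, add_zero, det_one]

lemma mulVec_dotProduct_self_of_transpose_eq_neg {n : ℕ} {A : Matrix (Fin n) (Fin n) ℝ}
    (hA : Aᵀ = -A) (v : Fin n → ℝ) : (A *ᵥ v) ⬝ᵥ v = 0 := by
  have h : (A *ᵥ v) ⬝ᵥ v = -((A *ᵥ v) ⬝ᵥ v) :=
    calc (A *ᵥ v) ⬝ᵥ v = (Aᵀ *ᵥ v) ⬝ᵥ v := by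
          rw [dotProduct_comm, dotProduct_mulVec, mulVec_transpose]
      _ = -((A *ᵥ v) ⬝ᵥ v) := by rw [hA, neg_mulVec, neg_dotProduct]
  linarith

theorem eq_one_of_continuous_of_sq_eq_one {g : ℝ → ℝ} (hg : Continuous g)
    (hsq : ∀ t, g t ^ 2 = 1) (h0 : g 0 = 1) (t : ℝ) : g t = 1 := by
  by_contra ht
  have hneg : g t = -1 := (sq_eq_one_iff.mp (hsq t)).resolve_left ht
  obtain ⟨s, -, hs⟩ : (0 : ℝ) ∈ g '' Set.uIcc 0 t :=
    intermediate_value_uIcc hg.continuousOn (by rw [h0, hneg]; simp)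
  simpa [hs] using hsq s

section PairBlocks

variable {n : ℕ}

def IsPairBlockDiag {α : Type*} [Zero α] (A : Matrix (Fin n) (Fin n) α) : Prop :=
  ∀ i j : Fin n, (i:ℕ)/2 ≠ (j:ℕ)/2 → A i j = 0

lemma IsPairBlockDiag.transpose {α : Type*} [Zero α] {A : Matrix (Fin n) (Fin n) α}
    (hA : IsPairBlockDiag A) : IsPairBlockDiag Aᵀ :=
  fun i j hij => hA j i (Ne.symm hij)

lemma IsPairBlockDiag.mul {α : Type*} [NonUnitalNonAssocSemiring α]
    {A B : Matrix (Fin n) (Fin n) α} (hA : IsPairBlockDiag A) (hB : IsPairBlockDiag B) :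
    IsPairBlockDiag (A * B) := by
  intro i j hij
  rw [mul_apply]
  refine Finset.sum_eq_zero fun r _ => ?_
  by_cases hir : (i:ℕ)/2 = (r:ℕ)/2
  · rw [hB r j (hir ▸ hij), mul_zero]
  · rw [hA i r hir, zero_mul]

variable {A : Matrix (Fin n) (Fin n) ℝ}

lemma IsPairBlockDiag.mulVec_apply_eq_mulVec_wv (hA : IsPairBlockDiag A) (x : Fin n → ℝ)
    {k : Fin ((n+1)/2)} {j : Fin n} (hj : (j:ℕ)/2 = k) : (A *ᵥ x) j = (A *ᵥ wv x k) j := by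
  simp only [mulVec, dotProduct]
  refine Finset.sum_congr rfl fun m _ => ?_
  by_cases hm : (m:ℕ)/2 = k
  · simp [wv, hm]
  · rw [hA j m (by omega), zero_mul, zero_mul]

lemma mulVec_dotProduct_wv (hskew : Aᵀ = -A) (hA : IsPairBlockDiag A) (x : Fin n → ℝ)
    (k : Fin ((n+1)/2)) : (A *ᵥ x) ⬝ᵥ wv x k = 0 := by
  calc (A *ᵥ x) ⬝ᵥ wv x k = (A *ᵥ wv x k) ⬝ᵥ wv x k := by
        refine Finset.sum_congr rfl fun j _ => ?_
        by_cases hj : (j:ℕ)/2 = k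
        · rw [hA.mulVec_apply_eq_mulVec_wv x hj]
        · simp [wv, hj]
    _ = 0 := mulVec_dotProduct_self_of_transpose_eq_neg hskew _

end PairBlocks

section PartialDerivatives

variable {m : ℕ}

lemma pdx_const (c : ℝ) (y : Fin m → ℝ) (j : Fin m) : pdx (fun _ => c) y j = 0 := by
  simp [pdx]

lemma pdx_fun_mul {g h : (Fin m → ℝ) → ℝ} {y : Fin m → ℝ} (hg : DifferentiableAt ℝ g y)
    (hh : DifferentiableAt ℝ h y) (j : Fin m) :
    pdx (fun z => g z * h z) y j = pdx g y j * h y + g y * pdx h y j := by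
  simp only [pdx, fderiv_fun_mul hg hh, _root_.add_apply, _root_.smul_apply, smul_eq_mul]
  ring

lemma pdx_fun_sum {k : ℕ} {g : Fin k → (Fin m → ℝ) → ℝ} {y : Fin m → ℝ}
    (hg : ∀ i, DifferentiableAt ℝ (g i) y) (j : Fin m) :
    pdx (fun z => ∑ i, g i z) y j = ∑ i, pdx (g i) y j := by
  simp [pdx, fderiv_fun_sum fun i _ => hg i]

lemma pdx_apply (a : Fin m) (y : Fin m → ℝ) (j : Fin m) :
    pdx (fun z => z a) y j = (Pi.single a 1 : Fin m → ℝ) j := by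
  simp [pdx, (hasFDerivAt_apply a y).fderiv, Pi.single_apply, eq_comm]

lemma pdx_comp {k : ℕ} {E : (Fin k → ℝ) → ℝ} {g : (Fin m → ℝ) → Fin k → ℝ} {y : Fin m → ℝ}
    (hE : DifferentiableAt ℝ E (g y)) (hg : DifferentiableAt ℝ g y) (j : Fin m) :
    pdx (fun z => E (g z)) y j = ∑ ℓ, pdx E (g y) ℓ * pdx (fun z => g z ℓ) y j := by
  simp only [pdx, fderiv_fun_comp y hE hg, fderiv_apply hg, ContinuousLinearMap.comp_apply]
  conv_lhs => rw [pi_eq_sum_univ' (fderiv ℝ g y (Pi.single j 1))]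
  simp [map_sum, mul_comm]

lemma gradx_sqrt_sq_add_sq {a b : Fin m} {x : Fin m → ℝ} (hab : a ≠ b)
    (hs : x a ^ 2 + x b ^ 2 ≠ 0) :
    gradx (fun z => √(z a ^ 2 + z b ^ 2)) x
      = (√(x a ^ 2 + x b ^ 2))⁻¹ • (Pi.single a (x a) + Pi.single b (x b)) := by
  have ha : HasFDerivAt (fun z : Fin m → ℝ => z a) (ContinuousLinearMap.proj (R := ℝ) a) x :=
    hasFDerivAt_apply a x
  have hb : HasFDerivAt (fun z : Fin m → ℝ => z b) (ContinuousLinearMap.proj (R := ℝ) b) x :=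
    hasFDerivAt_apply b x
  have hq := ((ha.pow 2).fun_add (hb.pow 2)).sqrt hs
  funext j
  rw [gradx, pdx, hq.fderiv]
  simp only [_root_.smul_apply, _root_.add_apply, ContinuousLinearMap.proj_apply, Pi.smul_apply,
    Pi.add_apply, smul_eq_mul, nsmul_eq_mul, Nat.cast_ofNat, Nat.add_one_sub_one, pow_one]
  rcases eq_or_ne j a with rfl | hja
  · simp only [Pi.single_eq_same, Pi.single_eq_of_ne hab, Pi.single_eq_of_ne' hab, mul_zero,
      add_zero]
    field_simp
  rcases eq_or_ne j b with rfl | hjb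
  · simp only [Pi.single_eq_same, Pi.single_eq_of_ne hab.symm, Pi.single_eq_of_ne' hab.symm,
      mul_zero, zero_add]
    field_simp
  simp [hja, hjb, hja.symm, hjb.symm]

end PartialDerivatives

section MatrixFields

variable {n N : ℕ} {M : (Fin N → ℝ) → Matrix (Fin n) (Fin n) ℝ}

lemma isPairBlockDiag_pdM (hM : ∀ z, IsPairBlockDiag (M z)) (y : Fin N → ℝ) (ℓ : Fin N) :
    IsPairBlockDiag (pdM M y ℓ) := by
  intro i j hij
  have hzero : (fun z => M z i j) = fun _ => 0 := funext fun z => hM z i j hij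
  simp only [pdM, of_apply, hzero, pdx_const]

theorem transpose_mul_pdM_transpose_eq_neg {y : Fin N → ℝ}
    (hM : ∀ i j, DifferentiableAt ℝ (fun z => M z i j) y) (horth : ∀ z, (M z)ᵀ * M z = 1)
    (ℓ : Fin N) : ((M y)ᵀ * pdM M y ℓ)ᵀ = -((M y)ᵀ * pdM M y ℓ) := by
  ext i j
  have hconst : (fun z => ∑ m, M z m j * M z m i) = fun _ => (1 : Matrix (Fin n) (Fin n) ℝ) j i :=
    funext fun z => by simp [← horth z, mul_apply]
  have hprod : ∀ m, DifferentiableAt ℝ (fun z => M z m j * M z m i) y :=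
    fun m => (hM m j).mul (hM m i)
  have h := congrArg (fun g => pdx g y ℓ) hconst
  simp only [pdx_fun_sum hprod, pdx_fun_mul (hM _ j) (hM _ i), pdx_const] at h
  simp only [transpose_apply, Matrix.neg_apply, mul_apply, pdM, of_apply,
    eq_neg_iff_add_eq_zero, ← Finset.sum_add_distrib]
  rw [← h]
  exact Finset.sum_congr rfl fun m _ => by ring

theorem gradm_eq_add_sum_vecMulVec {g : (Fin n → ℝ) → Fin N → ℝ} {u : (Fin n → ℝ) → Fin n → ℝ}
    {x : Fin n → ℝ} (hM : ∀ i j, DifferentiableAt ℝ (fun w => M w i j) (g x))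
    (hg : DifferentiableAt ℝ g x) (hu : ∀ z, u z = M (g z) *ᵥ z) :
    gradm u x = M (g x) + ∑ ℓ, vecMulVec (pdM M (g x) ℓ *ᵥ x) (gradx (fun z => g z ℓ) x) := by
  ext i j
  have hui : (fun z => u z i) = fun z => ∑ m, M (g z) i m * z m :=
    funext fun z => by rw [hu z]; rfl
  have hcomp : ∀ m, DifferentiableAt ℝ (fun z => M (g z) i m) x := fun m => (hM i m).comp x hg
  have hcoord : ∀ m : Fin n, DifferentiableAt ℝ (fun z : Fin n → ℝ => z m) x := fun m => by
    fun_prop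
  have hprod : ∀ m, DifferentiableAt ℝ (fun z => M (g z) i m * z m) x :=
    fun m => (hcomp m).mul (hcoord m)
  simp only [gradm, of_apply, hui, pdx_fun_sum hprod,
    pdx_fun_mul (hcomp _) (hcoord _), pdx_comp (hM _ _) hg, pdx_apply]
  simp only [Matrix.add_apply, Matrix.sum_apply, vecMulVec_apply, mulVec, dotProduct, pdM,
    of_apply, gradx, Pi.single_apply, mul_ite, mul_one, mul_zero, Finset.sum_add_distrib,
    Finset.sum_ite_eq, Finset.mem_univ, ↓reduceIte, Finset.sum_mul]
  rw [Finset.sum_comm, add_comm]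
  exact congrArg _ (Finset.sum_congr rfl fun _ _ => Finset.sum_congr rfl fun _ _ => by ring)

end MatrixFields

section RadialVariables

variable {n : ℕ} {ℓ : Fin ((n+1)/2)}

lemma yvar_eq_sqrt (h : 2*(ℓ:ℕ)+1 < n) :
    (fun z : Fin n → ℝ => yvar z ℓ)
      = fun z => √(z ⟨2*(ℓ:ℕ), by omega⟩ ^ 2 + z ⟨2*(ℓ:ℕ)+1, h⟩ ^ 2) := by
  funext z
  rw [yvar, dif_pos h]

lemma yvar_eq_apply_last (h : ¬ 2*(ℓ:ℕ)+1 < n) :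
    (fun z : Fin n → ℝ => yvar z ℓ) = fun z => z ⟨n - 1, by have := ℓ.isLt; omega⟩ := by
  funext z
  rw [yvar, dif_neg h]

lemma differentiableAt_yvar {x : Fin n → ℝ} (hx : 2*(ℓ:ℕ)+1 < n → 0 < yvar x ℓ) :
    DifferentiableAt ℝ (fun z => yvar z ℓ) x := by
  by_cases h : 2*(ℓ:ℕ)+1 < n
  · have hpos := hx h
    rw [yvar, dif_pos h] at hpos
    rw [yvar_eq_sqrt h]
    exact DifferentiableAt.sqrt (by fun_prop) (Real.sqrt_pos.mp hpos).ne'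
  · rw [yvar_eq_apply_last h]
    fun_prop

lemma wv_of_lt (x : Fin n → ℝ) (h : 2*(ℓ:ℕ)+1 < n) :
    wv x ℓ = Pi.single ⟨2*(ℓ:ℕ), by omega⟩ (x ⟨2*(ℓ:ℕ), by omega⟩)
      + Pi.single ⟨2*(ℓ:ℕ)+1, h⟩ (x ⟨2*(ℓ:ℕ)+1, h⟩) := by
  funext j
  simp only [wv, Pi.add_apply, Pi.single_apply, Fin.ext_iff]
  split_ifs <;>
    first | omega | simp only [add_zero, zero_add] <;> congr 1 <;> exact Fin.ext (by omega)

lemma gradx_yvar_of_lt {x : Fin n → ℝ} (h : 2*(ℓ:ℕ)+1 < n) (hx : 0 < yvar x ℓ) :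
    gradx (fun z => yvar z ℓ) x = (yvar x ℓ)⁻¹ • wv x ℓ := by
  rw [yvar, dif_pos h] at hx ⊢
  rw [yvar_eq_sqrt h, wv_of_lt x h, gradx_sqrt_sq_add_sq (by simp [Fin.ext_iff])
    (Real.sqrt_pos.mp hx).ne']

lemma gradx_yvar_of_not_lt {x : Fin n → ℝ} (h : ¬ 2*(ℓ:ℕ)+1 < n) :
    gradx (fun z => yvar z ℓ) x = Pi.single ⟨n - 1, by have := ℓ.isLt; omega⟩ 1 := by
  funext j
  rw [gradx, yvar_eq_apply_last h, pdx_apply]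

end RadialVariables

section WhirlRotation

variable {n : ℕ} (f : (Fin ((n+1)/2) → ℝ) → Fin (n/2) → ℝ)

lemma isPairBlockDiag_Qf (y : Fin ((n+1)/2) → ℝ) : IsPairBlockDiag (Qf f y) := by
  intro i j hij
  simp only [Qf, of_apply]
  rw [dif_neg (fun h => hij h.1), if_neg (by rintro rfl; exact hij rfl)]

lemma differentiable_Qf_apply (hf : ∀ k, Differentiable ℝ fun y => f y k) (i j : Fin n) :
    Differentiable ℝ fun y => Qf f y i j := by
  simp only [Qf, of_apply]
  split_ifs <;> fun_prop

theorem Qf_transpose_mul_self (y : Fin ((n+1)/2) → ℝ) : (Qf f y)ᵀ * Qf f y = 1 := by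
  ext i j
  simp only [mul_apply, transpose_apply, one_apply]
  by_cases hij : (i:ℕ)/2 = (j:ℕ)/2
  swap
  · rw [if_neg (by rintro rfl; exact hij rfl)]
    refine Finset.sum_eq_zero fun m _ => ?_
    by_cases hm : (m:ℕ)/2 = (i:ℕ)/2
    · rw [isPairBlockDiag_Qf f y m j (hm ▸ hij), mul_zero]
    · rw [isPairBlockDiag_Qf f y m i hm, zero_mul]
  obtain ⟨k, hik⟩ : ∃ k, (i:ℕ)/2 = k := ⟨_, rfl⟩
  by_cases hk : k < n/2
  · have h0 : 2*k/2 = k := by omega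
    have h1 : (2*k+1)/2 = k := by omega
    have ha : 2*k < n := by omega
    have hb : 2*k+1 < n := by omega
    rw [Fintype.sum_eq_add ⟨2*k, ha⟩ ⟨2*k+1, hb⟩ (by simp [Fin.ext_iff])
      fun m hm => by
        rw [isPairBlockDiag_Qf f y m i (by simp only [ne_eq, Fin.ext_iff] at hm; omega),
          zero_mul]]
    obtain rfl | rfl : i = ⟨2*k, ha⟩ ∨ i = ⟨2*k+1, hb⟩ := by
      simp only [Fin.ext_iff]; omega
    all_goals
      obtain rfl | rfl : j = ⟨2*k, ha⟩ ∨ j = ⟨2*k+1, hb⟩ := by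
        simp only [Fin.ext_iff]; omega
    all_goals
      simp only [Qf, of_apply, h0, h1, hk, and_self, ↓reduceDIte, ↓reduceIte, Nat.mul_mod_right,
        Nat.mul_add_mod_self_left, Nat.mod_succ, one_ne_zero, Fin.mk.injEq, Nat.left_eq_add,
        Nat.add_eq_left]
      first | ring1 | linear_combination Real.cos_sq_add_sin_sq (f y ⟨k, hk⟩)
  · -- `i = j = n - 1` is the unpaired last coordinate of odd `n`, where `Q` acts as the identity.
    obtain rfl : i = j := Fin.ext (by omega)
    have hcol : ∀ m, Qf f y m i = if m = i then 1 else 0 := fun m => by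
      simp only [Qf, of_apply]
      rw [dif_neg (by omega)]
    simp [hcol]

lemma Qf_zero (y : Fin ((n+1)/2) → ℝ) : Qf (fun _ _ => 0) y = 1 := by
  ext i j
  simp only [Qf, of_apply, one_apply, Real.cos_zero, Real.sin_zero, neg_zero]
  split_ifs <;> first | rfl | omega

theorem det_Qf (y : Fin ((n+1)/2) → ℝ) : (Qf f y).det = 1 := by
  let g : ℝ → ℝ := fun t => (Qf (fun z k => t * f z k) y).det
  have hg : Continuous g := by
    refine Continuous.matrix_det (continuous_matrix fun i j => ?_)
    simp only [Qf, of_apply]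
    split_ifs <;> fun_prop
  have hsq : ∀ t, g t ^ 2 = 1 := fun t => by
    simpa [sq] using congrArg det (Qf_transpose_mul_self (fun z k => t * f z k) y)
  have h0 : g 0 = 1 := by simp [g, Qf_zero]
  simpa [g] using eq_one_of_continuous_of_sq_eq_one hg hsq h0 1

end WhirlRotation

lemma mulVec_dotProduct_gradx_yvar {n : ℕ} {A : Matrix (Fin n) (Fin n) ℝ} (hskew : Aᵀ = -A)
    (hA : IsPairBlockDiag A) {x : Fin n → ℝ} {k : Fin ((n+1)/2)}
    (hx : 2*(k:ℕ)+1 < n → 0 < yvar x k) :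
    (A *ᵥ x) ⬝ᵥ gradx (fun z => yvar z k) x = 0 := by
  by_cases h : 2*(k:ℕ)+1 < n
  · rw [gradx_yvar_of_lt h (hx h), dotProduct_smul, mulVec_dotProduct_wv hskew hA, smul_zero]
  · -- `n` is odd and `c = n - 1` is alone in its pair, so `(A *ᵥ x) c = A c c * x c`.
    have hk := k.isLt
    set c : Fin n := ⟨n - 1, by omega⟩
    have hcc : A c c = 0 := by
      have := congrFun (congrFun hskew c) c
      simp only [transpose_apply, Matrix.neg_apply] at this
      linarith
    rw [gradx_yvar_of_not_lt h, dotProduct_single, mul_one, mulVec, dotProduct,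
      Finset.sum_eq_single c (fun m _ hm => by
        rw [hA c m (fun hcm => hm (Fin.ext (by simp only [c] at hcm ⊢; omega))), zero_mul])
        (by simp), hcc, zero_mul]

theorem stmt8_general (n : ℕ)
    (f : (Fin ((n+1)/2) → ℝ) → Fin (n/2) → ℝ)
    (hf : ∀ i, ContDiff ℝ 1 fun y => f y i)
    (u : (Fin n → ℝ) → Fin n → ℝ)
    (hu : ∀ z, u z = Qf f (yv z) *ᵥ z)
    (x : Fin n → ℝ)
    (hx : ∀ ℓ : Fin ((n+1)/2), 2*(ℓ:ℕ)+1 < n → 0 < yvar x ℓ) :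
    let Q := Qf f
    let y0 := yv x
    ((gradm u x).det = 1) ∧
    ((gradm u x).det
      = (1 + ∑ ℓ, vecMulVec (((Q y0)ᵀ * pdM Q y0 ℓ) *ᵥ x)
          (gradx (fun z => yvar z ℓ) x)).det) ∧
    (∀ p q : Fin ((n+1)/2) → Fin n → ℝ,
      (∀ ℓ k, p ℓ ⬝ᵥ q k = 0) →
      (1 + ∑ ℓ, vecMulVec (p ℓ) (q ℓ)).det = 1) := by
  dsimp only
  have hQ : ∀ i j, DifferentiableAt ℝ (fun y => Qf f y i j) (yv x) := fun i j =>
    (differentiable_Qf_apply f (fun k => (hf k).differentiable one_ne_zero) i j).differentiableAt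
  have hy : DifferentiableAt ℝ yv x := differentiableAt_pi.2 fun ℓ => differentiableAt_yvar (hx ℓ)
  set S := ∑ ℓ, vecMulVec (((Qf f (yv x))ᵀ * pdM (Qf f) (yv x) ℓ) *ᵥ x)
    (gradx (fun z => yvar z ℓ) x)
  have hfactor : gradm u x = Qf f (yv x) * (1 + S) := by
    rw [gradm_eq_add_sum_vecMulVec hQ hy hu, mul_add, mul_one, Finset.mul_sum]
    simp_rw [mul_vecMulVec, mulVec_mulVec, ← Matrix.mul_assoc,
      mul_eq_one_comm.mp (Qf_transpose_mul_self f (yv x)), Matrix.one_mul]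
    rfl -- `yv z ℓ` unfolds to `yvar z ℓ`
  have hdet : (gradm u x).det = (1 + S).det := by rw [hfactor, det_mul, det_Qf, one_mul]
  refine ⟨hdet.trans (det_one_add_sum_vecMulVec _ _ fun ℓ k => ?_), hdet,
    fun p q => det_one_add_sum_vecMulVec p q⟩
  exact mulVec_dotProduct_gradx_yvar
    (transpose_mul_pdM_transpose_eq_neg hQ (Qf_transpose_mul_self f) ℓ)
    ((isPairBlockDiag_Qf f _).transpose.mul (isPairBlockDiag_pdM (isPairBlockDiag_Qf f) _ ℓ))
    (hx k)

/-- Remark 3.9: every whirl map is incompressible, `det ∇u = 1`;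
more precisely `det ∇u = det[I + Σ_ℓ Qᵗ∂_ℓQ x ⊗ ∇y_ℓ]`, and for any families of vectors
`p_ℓ, q_k` with `⟨p_ℓ, q_k⟩ = 0` one has `det[I + Σ_ℓ p_ℓ ⊗ q_ℓ] = 1`. -/
theorem stmt8 (n : ℕ) (hn : 2 ≤ n)
    (f : (Fin ((n+1)/2) → ℝ) → Fin (n/2) → ℝ)
    (hf : ∀ i, ContDiff ℝ 1 fun y => f y i)
    (u : (Fin n → ℝ) → Fin n → ℝ)
    (hu : ∀ z, u z = Qf f (yv z) *ᵥ z)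
    (x : Fin n → ℝ)
    (hx : ∀ ℓ : Fin ((n+1)/2), 2*(ℓ:ℕ)+1 < n → 0 < yvar x ℓ) :
    let Q := Qf f
    let y0 := yv x
    ((gradm u x).det = 1) ∧
    ((gradm u x).det
      = (1 + ∑ ℓ, vecMulVec (((Q y0)ᵀ * pdM Q y0 ℓ) *ᵥ x)
          (gradx (fun z => yvar z ℓ) x)).det) ∧
    (∀ p q : Fin ((n+1)/2) → Fin n → ℝ,
      (∀ ℓ k, p ℓ ⬝ᵥ q k = 0) →
      (1 + ∑ ℓ, vecMulVec (p ℓ) (q ℓ)).det = 1) :=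
  stmt8_general n f hf u hu x hx
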